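/- arXiv:1807.00682 — 2 statements merged into one kernel-verified Lean document; each statement's English description precedes it below -/
import Mathlib

section
/- In the OMA power allocation (Theorem 1 of the paper), if the stationary point P* = ΦBK/(NV ln 2) − 1/(NΓ) satisfies P* < P_th ≤ P₀ (where P_th = (2^{Nρ/(ΦB)} − 1)/(NΓ)), then the minimum of the metric M over [0, P₀] is attained at P_th if M(P_th) < 0 and at 0 otherwise, where M(P) = V·P − K·(ΦB/N)·log₂(1 + NΓP)·𝟙{P ≥ P_th}. -/
open Real Set

/-- OMA allocation, case `P* < P_th ≤ P₀`: the effective metric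
`M(P) = V·P − K·(ΦB/N)·log₂(1 + NΓP)·𝟙{P ≥ P_th}` is minimized over `[0, P₀]`
at `P_th` if `M(P_th) < 0`, and at `0` otherwise. -/
theorem stmt11 (V K Φ B N Γ ρ P0 : ℝ) (hV : 0 < V) (hK : 0 < K) (hΦ : 0 < Φ)
    (hB : 0 < B) (hN : 1 ≤ N) (hΓ : 0 < Γ) (hρ : 0 < ρ)
    (Pth : ℝ) (hPth : Pth = ((2 : ℝ) ^ (N * ρ / (Φ * B)) - 1) / (N * Γ))
    (Pstar : ℝ) (hPstar : Pstar = Φ * B * K / (N * V * Real.log 2) - 1 / (N * Γ))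
    (hcase : Pstar < Pth) (hbudget : Pth ≤ P0)
    (M : ℝ → ℝ)
    (hM : ∀ P, M P = V * P - K * (Φ * B / N) * Real.logb 2 (1 + N * Γ * P) *
        (if Pth ≤ P then 1 else 0)) :
    (M Pth < 0 → IsMinOn M (Set.Icc 0 P0) Pth) ∧
      (0 ≤ M Pth → IsMinOn M (Set.Icc 0 P0) 0) := by
  have hN0 : (0:ℝ) < N := lt_of_lt_of_le one_pos hN
  have hL : 0 < Real.log 2 := Real.log_pos one_lt_two
  have hC : 0 < K * (Φ * B / N) := by positivity
  have hPth0 : 0 < Pth := by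
    rw [hPth]
    apply div_pos _ (by positivity)
    have h1 : (1:ℝ) < (2 : ℝ) ^ (N * ρ / (Φ * B)) := by
      apply (Real.one_lt_rpow_iff_of_pos (by norm_num)).2
      left
      exact ⟨one_lt_two, by positivity⟩
    linarith
  set C := K * (Φ * B / N) with hCdef
  have mono : ∀ x y, Pth ≤ x → x ≤ y → M x ≤ M y := by
    intro x y hx hxy
    have hyPth : Pth ≤ y := le_trans hx hxy
    rw [hM x, hM y, if_pos hx, if_pos hyPth, mul_one, mul_one]
    have hx0 : 0 < x := lt_of_lt_of_le hPth0 hx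
    have hx1 : 0 < 1 + N * Γ * x := by nlinarith [mul_pos (mul_pos hN0 hΓ) hx0]
    have hy1 : 0 < 1 + N * Γ * y := by nlinarith [mul_pos (mul_pos hN0 hΓ) hx0]
    have hkey : C * (N * Γ) < V * Real.log 2 * (1 + N * Γ * x) := by
      have h1 : Φ * B * K / (N * V * Real.log 2) - 1 / (N * Γ) < x := by
        rw [← hPstar]; exact lt_of_lt_of_le hcase hx
      have hNΓ : (0:ℝ) < N * Γ := by positivity
      have hNVL : (0:ℝ) < N * V * Real.log 2 := by positivity
      have h2 : Φ * B * K < (x + 1 / (N * Γ)) * (N * V * Real.log 2) := by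
        rw [← div_lt_iff₀ hNVL]; linarith
      have h3 : Φ * B * K * Γ < (x + 1 / (N * Γ)) * (N * V * Real.log 2) * Γ :=
        mul_lt_mul_of_pos_right h2 hΓ
      have hid : (x + 1 / (N * Γ)) * (N * V * Real.log 2) * Γ
          = V * Real.log 2 * (N * Γ * x) + V * Real.log 2 := by
        field_simp
      have hid2 : C * (N * Γ) = Φ * B * K * Γ := by
        rw [hCdef]; field_simp
      rw [hid2]
      rw [hid] at h3
      linarith [h3]
    have hlog : Real.log (1 + N * Γ * y) - Real.log (1 + N * Γ * x)
        ≤ N * Γ * (y - x) / (1 + N * Γ * x) := by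
      rw [← Real.log_div (ne_of_gt hy1) (ne_of_gt hx1)]
      have h := Real.log_le_sub_one_of_pos (div_pos hy1 hx1)
      have heq : (1 + N * Γ * y) / (1 + N * Γ * x) - 1
          = N * Γ * (y - x) / (1 + N * Γ * x) := by
        field_simp; ring
      linarith [heq ▸ h]
    have h2 : C * (Real.log (1 + N * Γ * y) - Real.log (1 + N * Γ * x))
        ≤ C * (N * Γ * (y - x) / (1 + N * Γ * x)) :=
      mul_le_mul_of_nonneg_left hlog (le_of_lt hC)
    have h3 : C * (N * Γ * (y - x) / (1 + N * Γ * x)) ≤ V * Real.log 2 * (y - x) := by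
      rw [mul_div_assoc', div_le_iff₀ hx1]
      nlinarith [hkey, sub_nonneg.2 hxy]
    have key2 : C * Real.log (1 + N * Γ * y) - C * Real.log (1 + N * Γ * x)
        ≤ V * Real.log 2 * (y - x) := by nlinarith [h2, h3]
    have hdiv : C * Real.log (1 + N * Γ * y) / Real.log 2
        - C * Real.log (1 + N * Γ * x) / Real.log 2 ≤ V * (y - x) := by
      rw [← sub_div, div_le_iff₀ hL]
      linarith [key2, show V * (y - x) * Real.log 2 = V * Real.log 2 * (y - x) from by ring]
    simp only [Real.logb]
    rw [mul_div_assoc, mul_div_assoc] at hdiv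
    linarith [hdiv]
  have hM0 : M 0 = 0 := by
    rw [hM, if_neg (not_le.2 hPth0)]; ring
  have hMsmall : ∀ P, P < Pth → M P = V * P := by
    intro P hPlt
    rw [hM, if_neg (not_le.2 hPlt)]; ring
  constructor
  · intro hneg
    rw [isMinOn_iff]
    intro P hP
    rcases lt_or_ge P Pth with h | h
    · have := hMsmall P h
      have hP0 : 0 ≤ P := hP.1
      nlinarith [mul_nonneg (le_of_lt hV) hP0]
    · exact mono Pth P le_rfl h
  · intro hpos
    rw [isMinOn_iff]
    intro P hP
    rw [hM0]
    rcases lt_or_ge P Pth with h | h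
    · rw [hMsmall P h]
      exact mul_nonneg (le_of_lt hV) hP.1
    · exact le_trans hpos (mono Pth P le_rfl h)
end

section
/- In the OMA allocation, if P_th ≤ P₀ ≤ P* (the budget is below the unconstrained minimizer), then the minimum of the effective metric M over [0, P₀] is attained at P₀ if M(P₀) < 0, and at 0 otherwise. -/
open Real Set

/-!
On `[P_th, P₀]` the metric is the smooth branch `V P - c log₂ (1 + a P)`, whose derivative
`V - c a / ((1 + a P) log 2)` is nonpositive up to the stationary point `P* = c / (V log 2) - 1 / a`;
so there it is at least `M(P₀)`. Below `P_th` it is `V P ≥ 0`, and `M(0) = 0` on either branch.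
Hence every value on `[0, P₀]` is at least `min (M P₀) 0`, attained at `P₀` or at `0`.
-/

lemma hasDerivAt_mul_sub_mul_logb_one_add (V c a x : ℝ) (hx : 0 < 1 + a * x) :
    HasDerivAt (fun P => V * P - c * logb 2 (1 + a * P))
      (V - c * a / ((1 + a * x) * log 2)) x := by
  have hlin : HasDerivAt (fun P => 1 + a * P) a x := by
    simpa using ((hasDerivAt_id x).const_mul a).const_add 1
  have hlog := ((hlin.log hx.ne').div_const (log 2)).const_mul c
  exact (((hasDerivAt_id' x).const_mul V).sub hlog).congr_deriv
    (by rw [mul_one, div_div, mul_div_assoc'])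

lemma antitoneOn_mul_sub_mul_logb_one_add {V c a : ℝ} (hV : 0 < V) (ha : 0 < a) :
    AntitoneOn (fun P => V * P - c * logb 2 (1 + a * P)) (Icc 0 (c / (V * log 2) - 1 / a)) := by
  have hlog2 : 0 < log 2 := log_pos one_lt_two
  have hderiv (x : ℝ) (hx : 0 ≤ x) := hasDerivAt_mul_sub_mul_logb_one_add V c a x (by positivity)
  refine antitoneOn_of_hasDerivWithinAt_nonpos (convex_Icc _ _)
    (fun x hx => (hderiv x hx.1).continuousAt.continuousWithinAt)
    (fun x hx => (hderiv x (interior_subset hx).1).hasDerivWithinAt) fun x hx => ?_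
  rw [interior_Icc] at hx
  have hbelow : (x + 1 / a) * (V * log 2) ≤ c := by
    rw [← le_div_iff₀ (by positivity)]
    linarith [hx.2]
  have hstat : V * (1 + a * x) * log 2 ≤ c * a := calc
    V * (1 + a * x) * log 2 = (x + 1 / a) * (V * log 2) * a := by field_simp; ring
    _ ≤ c * a := by gcongr
  rw [sub_nonpos, le_div_iff₀ (mul_pos (by nlinarith [mul_pos ha hx.1]) hlog2), ← mul_assoc]
  exact hstat

theorem stmt12_general (V K Φ B N Γ P0 : ℝ) (hV : 0 < V)
    (hN : 1 ≤ N) (hΓ : 0 < Γ)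
    (Pth : ℝ)
    (Pstar : ℝ) (hPstar : Pstar = Φ * B * K / (N * V * Real.log 2) - 1 / (N * Γ))
    (hcase1 : Pth ≤ P0) (hcase2 : P0 ≤ Pstar)
    (M : ℝ → ℝ)
    (hM : ∀ P, M P = V * P - K * (Φ * B / N) * Real.logb 2 (1 + N * Γ * P) *
        (if Pth ≤ P then 1 else 0)) :
    (M P0 < 0 → IsMinOn M (Set.Icc 0 P0) P0) ∧
      (0 ≤ M P0 → IsMinOn M (Set.Icc 0 P0) 0) := by
  have hN0 : 0 < N := by linarith
  have hanti := antitoneOn_mul_sub_mul_logb_one_add (c := K * (Φ * B / N)) hV (mul_pos hN0 hΓ)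
  rw [show K * (Φ * B / N) / (V * log 2) - 1 / (N * Γ) = Pstar by rw [hPstar]; field_simp] at hanti
  have hM0 : M 0 = 0 := by simp [hM]
  have hdichotomy : ∀ x ∈ Icc 0 P0, 0 ≤ M x ∨ M P0 ≤ M x := by
    intro x hx
    by_cases hx' : Pth ≤ x
    · right
      simp only [hM, if_pos hx', if_pos hcase1, mul_one]
      exact hanti ⟨hx.1, hx.2.trans hcase2⟩ ⟨hx.1.trans hx.2, hcase2⟩ hx.2
    · left
      simp only [hM, if_neg hx', mul_zero, sub_zero]
      exact mul_nonneg hV.le hx.1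
  refine ⟨fun hneg => isMinOn_iff.2 fun x hx => ?_, fun hnonneg => isMinOn_iff.2 fun x hx => ?_⟩
  · rcases hdichotomy x hx with h | h <;> linarith
  · rcases hdichotomy x hx with h | h <;> linarith

/-- OMA allocation, case `P_th ≤ P₀ ≤ P*`: the effective metric is minimized
over `[0, P₀]` at `P₀` if `M(P₀) < 0`, and at `0` otherwise. -/
theorem stmt12 (V K Φ B N Γ ρ P0 : ℝ) (hV : 0 < V) (hK : 0 < K) (hΦ : 0 < Φ)
    (hB : 0 < B) (hN : 1 ≤ N) (hΓ : 0 < Γ) (hρ : 0 < ρ)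
    (Pth : ℝ) (hPth : Pth = ((2 : ℝ) ^ (N * ρ / (Φ * B)) - 1) / (N * Γ))
    (Pstar : ℝ) (hPstar : Pstar = Φ * B * K / (N * V * Real.log 2) - 1 / (N * Γ))
    (hcase1 : Pth ≤ P0) (hcase2 : P0 ≤ Pstar)
    (M : ℝ → ℝ)
    (hM : ∀ P, M P = V * P - K * (Φ * B / N) * Real.logb 2 (1 + N * Γ * P) *
        (if Pth ≤ P then 1 else 0)) :
    (M P0 < 0 → IsMinOn M (Set.Icc 0 P0) P0) ∧
      (0 ≤ M P0 → IsMinOn M (Set.Icc 0 P0) 0) :=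
  stmt12_general V K Φ B N Γ P0 hV hN hΓ Pth Pstar hPstar hcase1 hcase2 M hM
end
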